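/- Fix δ > 0, a real-valued s ∈ C^∞(ℝ) with supp s ⊆ [-δ, ∞) and s(t)² + s(-t)² = 1 for all t ∈ ℝ, and α < β with δ < (β-α)/2. Then for every continuous function f : ℝ → ℝ and every t ∈ ℝ, ∫_ℝ P_{[ξ+α, ξ+β]} f(t) dξ = (β − α) · f(t). -/

import Mathlib

set_option maxHeartbeats 1000000

open MeasureTheory Real
noncomputable section

/-- The smooth projection `P_{[α,β]}` of Auscher–Weiss–Wickerhauser, with cutoff profile `s`
and smoothing parameter `δ`. -/
def Pab (s : ℝ → ℝ) (δ α β : ℝ) (f : ℝ → ℝ) (t : ℝ) : ℝ :=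
  if t < α - δ then 0
  else if t ≤ α + δ then s (t - α) ^ 2 * f t + s (t - α) * s (α - t) * f (2 * α - t)
  else if t < β - δ then f t
  else if t ≤ β + δ then s (β - t) ^ 2 * f t - s (t - β) * s (β - t) * f (2 * β - t)
  else 0

theorem integral_of_translated_smooth_projections
    (δ : ℝ) (hδ : 0 < δ)
    (s : ℝ → ℝ) (hs : ContDiff ℝ (⊤ : ℕ∞) s) (hsupp : tsupport s ⊆ Set.Ici (-δ))
    (hpyth : ∀ t : ℝ, s t ^ 2 + s (-t) ^ 2 = 1)
    (α β : ℝ) (hαβ : α < β) (hδαβ : δ < (β - α) / 2)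
    (f : ℝ → ℝ) (hf : Continuous f) (t : ℝ) :
    ∫ ξ : ℝ, Pab s δ (ξ + α) (ξ + β) f t = (β - α) * f t := by
  have hsc : Continuous s := hs.continuous
  set a := t - β - δ with ha
  set c := t - β + δ with hc
  set d := t - α - δ with hd
  set b := t - α + δ with hb
  have hac : a < c := by rw [ha, hc]; linarith
  have hcd : c < d := by rw [hc, hd]; linarith
  have hdb : d < b := by rw [hd, hb]; linarith
  set A : ℝ → ℝ := fun ξ =>
    s (t - (ξ + α)) ^ 2 * f t + s (t - (ξ + α)) * s (ξ + α - t) * f (2 * (ξ + α) - t) with hA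
  set B : ℝ → ℝ := fun ξ =>
    s (ξ + β - t) ^ 2 * f t - s (t - (ξ + β)) * s (ξ + β - t) * f (2 * (ξ + β) - t) with hB
  have hAcont : Continuous A := by rw [hA]; fun_prop
  have hBcont : Continuous B := by rw [hB]; fun_prop
  set h : ℝ → ℝ := fun ξ =>
    if ξ ≤ a then 0 else if ξ ≤ c then B ξ else if ξ ≤ d then f t
    else if ξ ≤ b then A ξ else 0 with hh
  -- pointwise identification away from {a, d}
  have key : ∀ ξ : ℝ, ξ ≠ a → ξ ≠ d → Pab s δ (ξ + α) (ξ + β) f t = h ξ := by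
    intro ξ hξa hξd
    simp only [Pab, hh]
    rcases lt_or_ge ξ a with h1 | h1
    · rw [if_neg (not_lt.2 (by linarith)), if_neg (not_le.2 (by linarith)),
        if_neg (not_lt.2 (by linarith)), if_neg (not_le.2 (by linarith)), if_pos h1.le]
    · have h1' : a < ξ := lt_of_le_of_ne h1 (Ne.symm hξa)
      rcases le_or_gt ξ c with h2 | h2
      · rw [if_neg (not_lt.2 (by linarith)), if_neg (not_le.2 (by linarith)),
          if_neg (not_lt.2 (by linarith)), if_pos (by linarith : t ≤ ξ + β + δ),
          if_neg (not_le.2 h1'), if_pos h2]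
      · rcases lt_or_ge ξ d with h3 | h3
        · rw [if_neg (not_lt.2 (by linarith)), if_neg (not_le.2 (by linarith)),
            if_pos (by linarith : t < ξ + β - δ),
            if_neg (not_le.2 h1'), if_neg (not_le.2 h2), if_pos h3.le]
        · have h3' : d < ξ := lt_of_le_of_ne h3 hξd.symm
          rcases le_or_gt ξ b with h4 | h4
          · rw [if_neg (not_lt.2 (by linarith)), if_pos (by linarith : t ≤ ξ + α + δ),
              if_neg (not_le.2 h1'), if_neg (not_le.2 h2), if_neg (not_le.2 h3'), if_pos h4]
          · rw [if_pos (by linarith : t < ξ + α - δ),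
              if_neg (not_le.2 h1'), if_neg (not_le.2 h2), if_neg (not_le.2 h3'),
              if_neg (not_le.2 h4)]
  -- a.e. identification
  have hae : (fun ξ => Pab s δ (ξ + α) (ξ + β) f t) =ᵐ[volume] h := by
    have hnull : volume ({a, d} : Set ℝ) = 0 :=
      Set.Countable.measure_zero (Set.to_countable _) _
    rw [Filter.EventuallyEq, ae_iff]
    refine measure_mono_null (fun ξ hξ => ?_) hnull
    simp only [Set.mem_setOf_eq] at hξ
    by_contra hm
    simp only [Set.mem_insert_iff, Set.mem_singleton_iff, not_or] at hm
    exact hξ (key ξ hm.1 hm.2)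
  rw [integral_congr_ae hae]
  -- restrict to the support interval
  have hsupp' : ∀ ξ : ℝ, ξ ∉ Set.Ioc a b → h ξ = 0 := by
    intro ξ hξ
    simp only [Set.mem_Ioc, not_and_or, not_lt, not_le] at hξ
    rcases hξ with hξ | hξ <;> simp only [hh] <;>
      split_ifs <;> first | rfl | linarith
  rw [← setIntegral_eq_integral_of_forall_compl_eq_zero hsupp',
    ← intervalIntegral.integral_of_le (le_of_lt (hac.trans (hcd.trans hdb)))]
  -- identifications on each subinterval
  have heqB : ∀ ξ ∈ Set.Ioc a c, h ξ = B ξ := by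
    intro ξ hξ; simp only [hh]
    rw [if_neg (not_le.2 hξ.1), if_pos hξ.2]
  have heqM : ∀ ξ ∈ Set.Ioc c d, h ξ = f t := by
    intro ξ hξ; simp only [hh]
    rw [if_neg (by linarith [hξ.1]), if_neg (not_le.2 hξ.1), if_pos hξ.2]
  have heqA : ∀ ξ ∈ Set.Ioc d b, h ξ = A ξ := by
    intro ξ hξ; simp only [hh]
    rw [if_neg (by linarith [hξ.1]), if_neg (by linarith [hξ.1]),
      if_neg (not_le.2 hξ.1), if_pos hξ.2]
  -- interval integrability of h on the pieces
  have iB : IntervalIntegrable h volume a c := by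
    rw [intervalIntegrable_iff_integrableOn_Ioc_of_le hac.le]
    exact (hBcont.integrableOn_Ioc).congr_fun (fun ξ hξ => (heqB ξ hξ).symm) measurableSet_Ioc
  have iM : IntervalIntegrable h volume c d := by
    rw [intervalIntegrable_iff_integrableOn_Ioc_of_le hcd.le]
    exact (continuous_const.integrableOn_Ioc).congr_fun
      (fun ξ hξ => (heqM ξ hξ).symm) measurableSet_Ioc
  have iA : IntervalIntegrable h volume d b := by
    rw [intervalIntegrable_iff_integrableOn_Ioc_of_le hdb.le]
    exact (hAcont.integrableOn_Ioc).congr_fun (fun ξ hξ => (heqA ξ hξ).symm) measurableSet_Ioc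
  rw [← intervalIntegral.integral_add_adjacent_intervals (iB) (iM.trans iA),
    ← intervalIntegral.integral_add_adjacent_intervals iM iA]
  -- replace h by the explicit formulas
  have eB : ∫ ξ in a..c, h ξ = ∫ ξ in a..c, B ξ :=
    intervalIntegral.integral_congr_ae (Filter.Eventually.of_forall fun ξ hξ =>
      heqB ξ (by rwa [Set.uIoc_of_le hac.le] at hξ))
  have eM : ∫ ξ in c..d, h ξ = ∫ _ in c..d, f t :=
    intervalIntegral.integral_congr_ae (Filter.Eventually.of_forall fun ξ hξ =>
      heqM ξ (by rwa [Set.uIoc_of_le hcd.le] at hξ))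
  have eA : ∫ ξ in d..b, h ξ = ∫ ξ in d..b, A ξ :=
    intervalIntegral.integral_congr_ae (Filter.Eventually.of_forall fun ξ hξ =>
      heqA ξ (by rwa [Set.uIoc_of_le hdb.le] at hξ))
  rw [eB, eM, eA]
  -- change of variables
  have hBsub : ∫ ξ in a..c, B ξ
      = ∫ v in (-δ)..δ, (s v ^ 2 * f t - s (-v) * s v * f (t + 2 * v)) := by
    have h1 := intervalIntegral.integral_comp_add_right (a := -δ) (b := δ) B (t - β)
    rw [show -δ + (t - β) = a by rw [ha]; ring, show δ + (t - β) = c by rw [hc]; ring] at h1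
    rw [← h1]
    apply intervalIntegral.integral_congr
    intro v _
    simp only [hB]
    rw [show v + (t - β) + β - t = v by ring, show t - (v + (t - β) + β) = -v by ring,
      show 2 * (v + (t - β) + β) - t = t + 2 * v by ring]
  have hAsub : ∫ ξ in d..b, A ξ
      = ∫ u in (-δ)..δ, (s u ^ 2 * f t + s u * s (-u) * f (t - 2 * u)) := by
    have h1 := intervalIntegral.integral_comp_sub_left (a := -δ) (b := δ) A (t - α)
    rw [show t - α - δ = d by rw [hd], show t - α - -δ = b by rw [hb]; ring] at h1
    rw [← h1]
    apply intervalIntegral.integral_congr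
    intro u _
    simp only [hA]
    rw [show t - (t - α - u + α) = u by ring, show t - α - u + α - t = -u by ring,
      show 2 * (t - α - u + α) - t = t - 2 * u by ring]
  rw [hBsub, hAsub]
  -- basic integrability facts
  have c1 : Continuous fun v : ℝ => s v ^ 2 * f t := by fun_prop
  have c2 : Continuous fun v : ℝ => s (-v) * s v * f (t + 2 * v) := by fun_prop
  have c3 : Continuous fun u : ℝ => s u * s (-u) * f (t - 2 * u) := by fun_prop
  have c4 : Continuous fun v : ℝ => s (-v) ^ 2 := by fun_prop
  rw [intervalIntegral.integral_sub (c1.intervalIntegrable _ _) (c2.intervalIntegrable _ _),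
    intervalIntegral.integral_add (c1.intervalIntegrable _ _) (c3.intervalIntegrable _ _),
    intervalIntegral.integral_mul_const]
  -- the square integral
  have hSrefl : (∫ v in (-δ)..δ, s (-v) ^ 2) = ∫ v in (-δ)..δ, s v ^ 2 := by
    have h1 := intervalIntegral.integral_comp_neg (a := -δ) (b := δ) (fun v => s v ^ 2)
    simpa [neg_neg] using h1
  have hS : (∫ v in (-δ)..δ, s v ^ 2) = δ := by
    have hsum : (∫ v in (-δ)..δ, (s v ^ 2 + s (-v) ^ 2)) = 2 * δ := by
      simp only [hpyth]
      rw [intervalIntegral.integral_const]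
      simp; ring
    rw [intervalIntegral.integral_add (f := fun v => s v ^ 2) ((hsc.pow 2).intervalIntegrable _ _)
      (c4.intervalIntegrable _ _), hSrefl] at hsum
    linarith
  -- cancellation of the cross terms
  have hJK : (∫ u in (-δ)..δ, s u * s (-u) * f (t - 2 * u))
      = ∫ v in (-δ)..δ, s (-v) * s v * f (t + 2 * v) := by
    have h1 := intervalIntegral.integral_comp_neg (a := -δ) (b := δ)
      (fun v => s (-v) * s v * f (t + 2 * v))
    rw [show (-δ : ℝ) = -δ by rfl] at h1
    have h2 : (∫ u in (-δ)..δ, s u * s (-u) * f (t - 2 * u))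
        = ∫ u in (-δ)..δ, s (- -u) * s (-u) * f (t + 2 * -u) := by
      apply intervalIntegral.integral_congr
      intro u _
      simp only [neg_neg]
      rw [show t + 2 * -u = t - 2 * u by ring]
    rw [h2]
    simpa [neg_neg] using h1
  rw [hS, hJK, intervalIntegral.integral_const, smul_eq_mul]
  have hdc : d - c = β - α - 2 * δ := by rw [hd, hc]; ring
  rw [hdc]
  ring

end
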